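/- (Frozen-path realization at non-final rounds.) Let SM₀ be any state machine, Sc any scenario, and T any frozen path under Sc. Then there exists a state machine SM that is equivalent to SM₀ (same decision vector under every scenario) and compatible with T under Sc at every non-final round: SM t p (fin t p) = T t p for all processes p and all rounds t with t+1 < r. -/

import Mathlib

/-- A scenario: initial states and a message-loss pattern. -/
structure Scenario (n r : ℕ) (S : Type) where
  init : Fin n → S
  loss : Fin r → Fin n → Fin n → Bool

/-- Execution of a state machine `SM` under scenario `Sc`. -/
def run {n r : ℕ} {S : Type} (SM : Fin r → Fin n → (Fin n → Option S) → S)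
    (Sc : Scenario n r S) : ℕ → Fin n → S
  | 0, p => Sc.init p
  | t + 1, p =>
      if h : t < r then
        SM ⟨t, h⟩ p (fun q => if Sc.loss ⟨t, h⟩ q p then none else some (run SM Sc t q))
      else run SM Sc t p

/-- The decision vector of `SM` under `Sc`. -/
def decision {n r : ℕ} {S : Type} (SM : Fin r → Fin n → (Fin n → Option S) → S)
    (Sc : Scenario n r S) : Fin n → S :=
  fun p => run SM Sc r p

/-- The frozen execution of a frozen path `T` under scenario `Sc`. -/
def fExec {n r : ℕ} {S : Type} (Sc : Scenario n r S) (T : Fin r → Fin n → S) :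
    ℕ → Fin n → S
  | 0, p => Sc.init p
  | t + 1, p => if h : t < r then T ⟨t, h⟩ p else fExec Sc T t p

/-- The frozen input at round `t` and process `p`. -/
def fIn {n r : ℕ} {S : Type} (Sc : Scenario n r S) (T : Fin r → Fin n → S)
    (t : Fin r) (p : Fin n) : Fin n → Option S :=
  fun q => if Sc.loss t q p then none else some (fExec Sc T t.val q)

/-!
Relabel the states of `SM₀` by a bijection `e t p` of `S`, chosen separately for every round
boundary `t` and process `p`: the new machine decodes each received message with the sender's
current relabelling, runs `SM₀`, and encodes the result with its own next relabelling. Its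
execution is then the relabelled execution of `SM₀`, so decisions agree as soon as the relabellings
at times `0` and `r` are trivial. At every earlier boundary `t + 1 < r` the relabelling is free, and
the transposition exchanging `SM₀`'s output on the decoded frozen input with `T t p` makes the new
machine produce `T t p` there.
-/

section Relabel

variable {n r : ℕ} {S : Type}

def relabel (e : ℕ → Fin n → Equiv.Perm S) (SM : Fin r → Fin n → (Fin n → Option S) → S) :
    Fin r → Fin n → (Fin n → Option S) → S :=
  fun t p v => e (t + 1) p (SM t p fun q => (v q).map (e t q).symm)

theorem run_relabel (e : ℕ → Fin n → Equiv.Perm S) (SM : Fin r → Fin n → (Fin n → Option S) → S)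
    (Sc : Scenario n r S) (he : ∀ p, e 0 p = 1) :
    ∀ s ≤ r, ∀ p, run (relabel e SM) Sc s p = e s p (run SM Sc s p) := by
  intro s
  induction s with
  | zero => simp [run, he]
  | succ t ih =>
    intro hs p
    have ht : t < r := hs
    simp only [run, dif_pos ht, relabel]
    congr 2
    funext q
    split <;> simp [ih (Nat.le_of_succ_le hs) q]

theorem decision_relabel (e : ℕ → Fin n → Equiv.Perm S)
    (SM : Fin r → Fin n → (Fin n → Option S) → S) (Sc : Scenario n r S)
    (he₀ : ∀ p, e 0 p = 1) (heᵣ : ∀ p, e r p = 1) :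
    decision (relabel e SM) Sc = decision SM Sc := by
  funext p
  simp [decision, run_relabel e SM Sc he₀ r le_rfl, heᵣ]

end Relabel

section FrozenRelabelling

variable {n r : ℕ} {S : Type} [DecidableEq S]

noncomputable def frozenRelabelling (SM₀ : Fin r → Fin n → (Fin n → Option S) → S)
    (Sc : Scenario n r S) (T : Fin r → Fin n → S) : ℕ → Fin n → Equiv.Perm S
  | 0 => fun _ => 1
  | t + 1 => fun p =>
      if h : t + 1 < r then
        let t' : Fin r := ⟨t, Nat.lt_of_succ_lt h⟩
        Equiv.swap
          (SM₀ t' p fun q => (fIn Sc T t' p q).map (frozenRelabelling SM₀ Sc T t q).symm)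
          (T t' p)
      else 1

variable (SM₀ : Fin r → Fin n → (Fin n → Option S) → S) (Sc : Scenario n r S)
  (T : Fin r → Fin n → S)

theorem frozenRelabelling_zero (p : Fin n) : frozenRelabelling SM₀ Sc T 0 p = 1 := rfl

theorem frozenRelabelling_last (p : Fin n) : frozenRelabelling SM₀ Sc T r p = 1 := by
  cases r with
  | zero => rfl
  | succ r => simp [frozenRelabelling]

theorem relabel_frozenRelabelling_fIn (t : Fin r) (ht : t.val + 1 < r) (p : Fin n) :
    relabel (frozenRelabelling SM₀ Sc T) SM₀ t p (fIn Sc T t p) = T t p := by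
  simp only [relabel, frozenRelabelling, dif_pos ht]
  exact Equiv.swap_apply_left _ _

end FrozenRelabelling

theorem stmt_3_general (n r : ℕ)
    (S : Type)
    (SM₀ : Fin r → Fin n → (Fin n → Option S) → S)
    (Sc : Scenario n r S) (T : Fin r → Fin n → S) :
    ∃ SM : Fin r → Fin n → (Fin n → Option S) → S,
      (∀ Sc' : Scenario n r S, decision SM Sc' = decision SM₀ Sc') ∧
      ∀ t : Fin r, t.val + 1 < r → ∀ p : Fin n, SM t p (fIn Sc T t p) = T t p := by
  classical
  refine ⟨relabel (frozenRelabelling SM₀ Sc T) SM₀, fun Sc' => ?_, ?_⟩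
  · exact decision_relabel _ SM₀ Sc' (frozenRelabelling_zero SM₀ Sc T)
      (frozenRelabelling_last SM₀ Sc T)
  · exact relabel_frozenRelabelling_fIn SM₀ Sc T

/-- Frozen-path realization at non-final rounds. -/
theorem stmt_3 (n r : ℕ) (hn : 1 ≤ n) (hr : 1 ≤ r)
    (S : Type) [Fintype S] [Nonempty S]
    (SM₀ : Fin r → Fin n → (Fin n → Option S) → S)
    (Sc : Scenario n r S) (T : Fin r → Fin n → S) :
    ∃ SM : Fin r → Fin n → (Fin n → Option S) → S,
      (∀ Sc' : Scenario n r S, decision SM Sc' = decision SM₀ Sc') ∧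
      ∀ t : Fin r, t.val + 1 < r → ∀ p : Fin n, SM t p (fIn Sc T t p) = T t p :=
  stmt_3_general n r S SM₀ Sc T
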